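/- arXiv:2506.23413 — 8 statements merged into one kernel-verified Lean document; each statement's English description precedes it below -/
import Mathlib

section
/- In a lextensive category, for each monomorphism m : S → A, the square with top arrow [1_S,1_S] : S+S → S, left arrow m+1_S : S+S → A+S, bottom arrow [1_A,m] : A+S → A, and right arrow m : S → A is a pullback. -/
/-!
Pullback along a fixed arrow `v : B ⟶ Z` commutes with binary coproducts in an extensive
category: the pullback of `v` along `[f₁, f₂] : X₁ ⨿ X₂ ⟶ Z` restricts over `X₁` and `X₂` to the
pullbacks of `v` along `f₁` and `f₂` (pasting), and by universality of `X₁ ⨿ X₂` it is their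
coproduct. So a coproduct of two pullback squares over `v` is a pullback square. The square of
the theorem is the coproduct of the trivial square `(1, m, m, 1)` and of the kernel pair
`(1, 1, m, m)` of the monomorphism `m`.
-/

open CategoryTheory Limits

theorem CategoryTheory.IsPullback.coprod {C : Type*} [Category C] [FinitaryPreExtensive C]
    [HasPullbacks C] {P₁ P₂ B X₁ X₂ Z : C} {q₁ : P₁ ⟶ B} {q₂ : P₂ ⟶ B} {r₁ : P₁ ⟶ X₁} {r₂ : P₂ ⟶ X₂}
    {v : B ⟶ Z} {f₁ : X₁ ⟶ Z} {f₂ : X₂ ⟶ Z}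
    (h₁ : IsPullback q₁ r₁ v f₁) (h₂ : IsPullback q₂ r₂ v f₂) :
    IsPullback (coprod.desc q₁ q₂) (coprod.map r₁ r₂) v (coprod.desc f₁ f₂) := by
  have pb := IsPullback.of_hasPullback v (coprod.desc f₁ f₂)
  let k₁ : P₁ ⟶ pullback v (coprod.desc f₁ f₂) :=
    pullback.lift q₁ (r₁ ≫ coprod.inl) (by simp [h₁.w, coprod.inl_desc])
  let k₂ : P₂ ⟶ pullback v (coprod.desc f₁ f₂) :=
    pullback.lift q₂ (r₂ ≫ coprod.inr) (by simp [h₂.w, coprod.inr_desc])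
  have s₁ : IsPullback k₁ r₁ (pullback.snd _ _) coprod.inl :=
    IsPullback.of_right (by simpa [k₁, pullback.lift_fst, coprod.inl_desc] using h₁)
      (pullback.lift_snd _ _ _) pb
  have s₂ : IsPullback k₂ r₂ (pullback.snd _ _) coprod.inr :=
    IsPullback.of_right (by simpa [k₂, pullback.lift_fst, coprod.inr_desc] using h₂)
      (pullback.lift_snd _ _ _) pb
  obtain ⟨hk⟩ := FinitaryPreExtensive.universal' _ (coprodIsCoprod X₁ X₂)
    (BinaryCofan.mk k₁ k₂) (mapPair r₁ r₂) (pullback.snd _ _)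
    (by ext ⟨⟨⟩⟩ <;> exact (pullback.lift_snd _ _ _).symm) (.of_discrete _)
    (by rintro ⟨⟨⟩⟩; exacts [s₁, s₂])
  have : IsIso (coprod.desc k₁ k₂) :=
    (colimit.isColimit _).nonempty_isColimit_iff_isIso_desc.mp ⟨hk⟩
  have comparison : IsPullback (coprod.desc k₁ k₂) (coprod.map r₁ r₂) (pullback.snd _ _) (𝟙 _) :=
    IsPullback.of_horiz_isIso ⟨by ext <;> simp [k₁, k₂, pullback.lift_snd]⟩
  simpa [k₁, k₂, pullback.lift_fst] using comparison.paste_horiz pb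

/-- In a lextensive category, for each monomorphism `m : S ⟶ A`, the square with top
`[1,1] : S+S ⟶ S`, left `m+1 : S+S ⟶ A+S`, right `m : S ⟶ A` and bottom
`[1,m] : A+S ⟶ A` is a pullback. -/
theorem mono_codiagonal_square_isPullback {C : Type*} [Category C]
    [HasFiniteLimits C] [FinitaryExtensive C] {S A : C} (m : S ⟶ A) [Mono m] :
    IsPullback (coprod.desc (𝟙 S) (𝟙 S)) (coprod.map m (𝟙 S)) m (coprod.desc (𝟙 A) m) :=
  (IsPullback.id_horiz m).coprod (IsKernelPair.id_of_mono m)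
end

section
/- A finitely complete category C with an initial object is extensive if and only if: (a) C has finite coproducts; (b) binary coproducts of pullback squares are pullback squares; and (c) for each morphism f : A → B, the square with top [1_A,1_A] : A+A → A, left f+f, bottom [1_B,1_B] : B+B → B, right f is a pullback. -/
/-!
In an extensive category pullbacks distribute over binary coproducts: the pullback of `v` along
`u : X₁ ⨿ X₂ ⟶ S` is the coproduct of the pullbacks of `v` along `inl ≫ u` and `inr ≫ u`.
Both conditions are instances of this.

Conversely, the codiagonal square of a morphism `A ⟶ ⊥` forces the two injections `A ⟶ A ⨿ A`
to agree, so initial objects are strict. The injections then form pullback squares against any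
`coprod.map αX αY`, as coproducts of an identity square with a square of initial objects. For
`f : Z ⟶ X ⨿ Y`, the coproduct of the pullbacks of `f` along the two injections, pasted with the
codiagonal square of `f`, is a pullback of `f` along `𝟙 (X ⨿ Y)`; so `Z` is the coproduct of these
pullbacks. These are the two halves of the van Kampen property of binary coproducts.
-/

open CategoryTheory Limits

/-- Binary coproducts of pullback squares are pullback squares. -/
def CoprodOfPullbacksIsPullback (C : Type*) [Category C] [HasBinaryCoproducts C] : Prop :=
  ∀ {P X Y Z P' X' Y' Z' : C}
    (fst : P ⟶ X) (snd : P ⟶ Y) (f : X ⟶ Z) (g : Y ⟶ Z)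
    (fst' : P' ⟶ X') (snd' : P' ⟶ Y') (f' : X' ⟶ Z') (g' : Y' ⟶ Z'),
    IsPullback fst snd f g → IsPullback fst' snd' f' g' →
      IsPullback (coprod.map fst fst') (coprod.map snd snd')
        (coprod.map f f') (coprod.map g g')

namespace CategoryTheory

variable {C : Type*} [Category C]

theorem FinitaryExtensive.isPullback_inl_inr_coprodMap [FinitaryExtensive C] {X X' Y Y' : C}
    (f : X ⟶ X') (g : Y ⟶ Y') :
    IsPullback coprod.inl f (coprod.map f g) coprod.inl ∧
      IsPullback coprod.inr g (coprod.map f g) coprod.inr :=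
  ((BinaryCofan.isVanKampen_iff _).mp (FinitaryExtensive.van_kampen' _ (coprodIsCoprod X' Y'))
    (BinaryCofan.mk coprod.inl coprod.inr) f g (coprod.map f g)
    (coprod.inl_map f g).symm (coprod.inr_map f g).symm).mp ⟨coprodIsCoprod X Y⟩

theorem FinitaryExtensive.isPullback_coprodMap_coprodDesc [FinitaryExtensive C]
    {X₁ X₂ S B P₁ P₂ : C} {u : X₁ ⨿ X₂ ⟶ S} {v : B ⟶ S} [HasPullback u v]
    {p₁ : P₁ ⟶ X₁} {q₁ : P₁ ⟶ B} {p₂ : P₂ ⟶ X₂} {q₂ : P₂ ⟶ B}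
    (h₁ : IsPullback p₁ q₁ (coprod.inl ≫ u) v) (h₂ : IsPullback p₂ q₂ (coprod.inr ≫ u) v) :
    IsPullback (coprod.map p₁ p₂) (coprod.desc q₁ q₂) u v := by
  let ι₁ : P₁ ⟶ pullback u v := pullback.lift (p₁ ≫ coprod.inl) q₁ (by simp [h₁.w])
  let ι₂ : P₂ ⟶ pullback u v := pullback.lift (p₂ ≫ coprod.inr) q₂ (by simp [h₂.w])
  have hW := (IsPullback.of_hasPullback u v).flip
  have sq₁ : IsPullback ι₁ p₁ (pullback.fst u v) coprod.inl :=
    .of_right (by simpa [ι₁, pullback.lift_snd] using h₁.flip) (pullback.lift_fst _ _ _) hW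
  have sq₂ : IsPullback ι₂ p₂ (pullback.fst u v) coprod.inr :=
    .of_right (by simpa [ι₂, pullback.lift_snd] using h₂.flip) (pullback.lift_fst _ _ _) hW
  obtain ⟨hι⟩ := ((BinaryCofan.isVanKampen_iff _).mp
    (FinitaryExtensive.van_kampen' _ (coprodIsCoprod X₁ X₂)) (BinaryCofan.mk ι₁ ι₂) p₁ p₂
    (pullback.fst u v) sq₁.w.symm sq₂.w.symm).mpr ⟨sq₁, sq₂⟩
  let e : P₁ ⨿ P₂ ≅ pullback u v := (coprodIsCoprod P₁ P₂).coconePointUniqueUpToIso hι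
  have e₁ : coprod.inl ≫ e.hom = ι₁ :=
    (coprodIsCoprod P₁ P₂).comp_coconePointUniqueUpToIso_hom hι ⟨.left⟩
  have e₂ : coprod.inr ≫ e.hom = ι₂ :=
    (coprodIsCoprod P₁ P₂).comp_coconePointUniqueUpToIso_hom hι ⟨.right⟩
  refine .of_iso_pullback ⟨by ext <;> simp [coprod.inl_desc, coprod.inr_desc, h₁.w, h₂.w]⟩ e
    ?_ ?_
  · ext <;> simp [reassoc_of% e₁, reassoc_of% e₂, ι₁, ι₂, pullback.lift_fst]
  · ext <;> simp [reassoc_of% e₁, reassoc_of% e₂, ι₁, ι₂, pullback.lift_snd, coprod.inl_desc,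
      coprod.inr_desc]

theorem FinitaryExtensive.coprodOfPullbacksIsPullback [FinitaryExtensive C] [HasPullbacks C] :
    CoprodOfPullbacksIsPullback C := by
  intro P X Y Z P' X' Y' Z' fst snd f g fst' snd' f' g' h h'
  have hg := FinitaryExtensive.isPullback_inl_inr_coprodMap g g'
  rw [← coprod.desc_comp_inl_comp_inr snd snd']
  refine isPullback_coprodMap_coprodDesc ?_ ?_
  · simpa [coprod.inl_map] using h.paste_vert hg.1.flip
  · simpa [coprod.inr_map] using h'.paste_vert hg.2.flip

theorem FinitaryExtensive.isPullback_codiag [FinitaryExtensive C] [HasPullbacks C] {A B : C}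
    (f : A ⟶ B) : IsPullback (codiag A) (coprod.map f f) f (codiag B) := by
  refine IsPullback.flip (isPullback_coprodMap_coprodDesc ?_ ?_) <;>
    simpa [coprod.inl_desc, coprod.inr_desc] using IsPullback.id_vert f

theorem hasStrictInitialObjects_of_isPullback_codiag [HasInitial C] [HasBinaryCoproducts C]
    (hc : ∀ {A : C} (f : A ⟶ ⊥_ C), IsPullback (codiag A) (coprod.map f f) f (codiag (⊥_ C))) :
    HasStrictInitialObjects C := by
  refine hasStrictInitialObjects_of_initial_is_strict fun A f ↦ ?_
  have hinl : (coprod.inl : A ⟶ A ⨿ A) = coprod.inr := by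
    refine (hc f).hom_ext (by simp [coprod.inl_desc, coprod.inr_desc]) ?_
    rw [coprod.inl_map, coprod.inr_map, initial.hom_ext (coprod.inl : ⊥_ C ⟶ _) coprod.inr]
  have hA : IsInitial A := IsInitial.ofUniqueHom (fun Y ↦ f ≫ initial.to Y) fun Y u ↦ by
    simpa [coprod.inl_desc, coprod.inr_desc] using hinl =≫ coprod.desc u (f ≫ initial.to Y)
  exact isIso_of_isInitial hA initialIsInitial f

theorem isPullback_initial_to_id [HasInitial C] [HasStrictInitialObjects C] {Y' Y : C}
    (g : Y' ⟶ Y) : IsPullback (initial.to Y') (𝟙 (⊥_ C)) g (initial.to Y) := by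
  have hW (s : PullbackCone g (initial.to Y)) : IsInitial s.pt :=
    IsInitial.ofStrict s.snd initialIsInitial
  exact .of_isLimit' ⟨initial.hom_ext _ _⟩ (PullbackCone.IsLimit.mk _ (fun s ↦ (hW s).to _)
    (fun s ↦ (hW s).hom_ext _ _) (fun s ↦ (hW s).hom_ext _ _) fun s _ _ _ ↦ (hW s).hom_ext _ _)

end CategoryTheory

namespace CoprodOfPullbacksIsPullback

variable {C : Type*} [Category C] [HasBinaryCoproducts C]

theorem isPullback_inl_coprodMap [HasInitial C] [HasStrictInitialObjects C]
    (hb : CoprodOfPullbacksIsPullback C) {X' X Y' Y : C} (αX : X' ⟶ X) (αY : Y' ⟶ Y) :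
    IsPullback coprod.inl αX (coprod.map αX αY) coprod.inl := by
  have : IsIso (coprod.inl : X' ⟶ X' ⨿ ⊥_ C) := (coprod.rightUnitor X').isIso_inv
  have : IsIso (coprod.inl : X ⟶ X ⨿ ⊥_ C) := (coprod.rightUnitor X).isIso_inv
  have hX : IsPullback coprod.inl αX (coprod.map αX (𝟙 (⊥_ C))) coprod.inl :=
    .of_horiz_isIso ⟨by simp [coprod.inl_map]⟩
  simpa [coprod.inl_map] using
    hX.paste_horiz (hb _ _ _ _ _ _ _ _ (IsPullback.id_horiz αX) (isPullback_initial_to_id αY))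

theorem isPullback_inr_coprodMap [HasInitial C] [HasStrictInitialObjects C]
    (hb : CoprodOfPullbacksIsPullback C) {X' X Y' Y : C} (αX : X' ⟶ X) (αY : Y' ⟶ Y) :
    IsPullback coprod.inr αY (coprod.map αX αY) coprod.inr := by
  have : IsIso (coprod.inr : Y' ⟶ (⊥_ C) ⨿ Y') := (coprod.leftUnitor Y').isIso_inv
  have : IsIso (coprod.inr : Y ⟶ (⊥_ C) ⨿ Y) := (coprod.leftUnitor Y).isIso_inv
  have hY : IsPullback coprod.inr αY (coprod.map (𝟙 (⊥_ C)) αY) coprod.inr :=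
    .of_horiz_isIso ⟨by simp [coprod.inr_map]⟩
  simpa [coprod.inr_map] using
    hY.paste_horiz (hb _ _ _ _ _ _ _ _ (isPullback_initial_to_id αX) (IsPullback.id_horiz αY))

theorem isIso_coprodDesc_pullbackFst [HasPullbacks C] (hb : CoprodOfPullbacksIsPullback C)
    {X Y Z : C} (f : Z ⟶ X ⨿ Y)
    (hf : IsPullback (codiag Z) (coprod.map f f) f (codiag (X ⨿ Y))) :
    IsIso (coprod.desc (pullback.fst f (coprod.inl : X ⟶ X ⨿ Y)) (pullback.fst f coprod.inr)) := by
  have h := (hb _ _ _ _ _ _ _ _ (IsPullback.of_hasPullback f coprod.inl).flip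
    (IsPullback.of_hasPullback f coprod.inr).flip).flip.paste_horiz hf
  rw [coprod.map_inl_inr_codiag] at h
  simpa using h.isIso_fst_of_isIso

end CoprodOfPullbacksIsPullback

theorem CategoryTheory.FinitaryExtensive.of_coprodOfPullbacksIsPullback {C : Type*} [Category C]
    [HasFiniteCoproducts C] [HasPullbacks C] (hb : CoprodOfPullbacksIsPullback C)
    (hc : ∀ {A B : C} (f : A ⟶ B), IsPullback (codiag A) (coprod.map f f) f (codiag B)) :
    FinitaryExtensive C := by
  have := hasStrictInitialObjects_of_isPullback_codiag fun f ↦ hc f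
  refine ⟨fun {X Y} c hc' ↦ IsVanKampenColimit.of_iso ?_ ((coprodIsCoprod X Y).uniqueUpToIso hc')⟩
  refine BinaryCofan.isVanKampen_mk _ (fun X Y ↦ BinaryCofan.mk coprod.inl coprod.inr)
    (fun X Y ↦ coprodIsCoprod X Y) (fun f g ↦ PullbackCone.mk _ _ pullback.condition)
    (fun f g ↦ pullbackIsPullback f g) ?_ ?_
  · intro X' Y' αX αY f hX hY
    obtain rfl : f = coprod.map αX αY :=
      coprod.hom_ext (hX.symm.trans (coprod.inl_map αX αY).symm)
        (hY.symm.trans (coprod.inr_map αX αY).symm)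
    exact ⟨hb.isPullback_inl_coprodMap αX αY, hb.isPullback_inr_coprodMap αX αY⟩
  · intro Z f
    exact IsColimit.ofPointIso (colimit.isColimit _)
      (i := hb.isIso_coprodDesc_pullbackFst f (hc f))

theorem finitaryExtensive_iff_conditions_general (C : Type*) [Category C]
    [HasFiniteLimits C] [HasFiniteCoproducts C] :
    FinitaryExtensive C ↔
      HasFiniteCoproducts C ∧ CoprodOfPullbacksIsPullback C ∧
        (∀ {A B : C} (f : A ⟶ B),
          IsPullback (coprod.desc (𝟙 A) (𝟙 A)) (coprod.map f f) f
            (coprod.desc (𝟙 B) (𝟙 B))) :=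
  ⟨fun _ ↦ ⟨inferInstance, FinitaryExtensive.coprodOfPullbacksIsPullback,
      FinitaryExtensive.isPullback_codiag⟩,
    fun ⟨_, hb, hc⟩ ↦ FinitaryExtensive.of_coprodOfPullbacksIsPullback hb hc⟩

/-- A finitely complete category with an initial object and finite coproducts is
extensive if and only if binary coproducts of pullback squares are pullback squares and
for each morphism `f : A ⟶ B` the codiagonal square over `f` is a pullback. -/
theorem finitaryExtensive_iff_conditions (C : Type*) [Category C]
    [HasFiniteLimits C] [HasInitial C] [HasFiniteCoproducts C] :
    FinitaryExtensive C ↔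
      HasFiniteCoproducts C ∧ CoprodOfPullbacksIsPullback C ∧
        (∀ {A B : C} (f : A ⟶ B),
          IsPullback (coprod.desc (𝟙 A) (𝟙 A)) (coprod.map f f) f
            (coprod.desc (𝟙 B) (𝟙 B))) :=
  finitaryExtensive_iff_conditions_general C
end

section
/- In a finitely complete category with an initial object where, for each morphism i : I → 0 to the initial object, the square with top [1_I,1_I] : I+I → I, left i+i : I+I → 0+0, bottom [1_0,1_0] : 0+0 → 0, right i is a pullback, the initial object is strict: any morphism I → 0 is an isomorphism. -/
/-!
If the codiagonal square over `i : I ⟶ ⊥` is a pullback, the two coprojections `I ⟶ I ⨿ I`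
agree, because they agree after the codiagonal and after `i ⨿ i` (the two coprojections
`⊥ ⟶ ⊥ ⨿ ⊥` agree since `⊥` is initial). Then any two morphisms out of `I` agree, so
`initial.to I` is inverse to `i`.
-/

open CategoryTheory Limits

namespace CategoryTheory.Limits

variable {C : Type*} [Category C]

theorem coprod_inl_eq_inr_of_isPullback_codiag {X B : C} [HasBinaryCoproduct X X]
    [HasBinaryCoproduct B B] {i : X ⟶ B} (hB : (coprod.inl : B ⟶ B ⨿ B) = coprod.inr)
    (h : IsPullback (codiag X) (coprod.map i i) i (codiag B)) :
    (coprod.inl : X ⟶ X ⨿ X) = coprod.inr :=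
  h.hom_ext (by rw [coprod.inl_desc, coprod.inr_desc])
    (by rw [coprod.inl_map, coprod.inr_map, hB])

theorem eq_of_coprod_inl_eq_inr {X Y : C} [HasBinaryCoproduct X X]
    (hX : (coprod.inl : X ⟶ X ⨿ X) = coprod.inr) (f g : X ⟶ Y) : f = g := by
  rw [← coprod.inl_desc f g, hX, coprod.inr_desc]

theorem isIso_to_initial_of_coprod_inl_eq_inr [HasInitial C] {X : C} [HasBinaryCoproduct X X]
    (hX : (coprod.inl : X ⟶ X ⨿ X) = coprod.inr) (i : X ⟶ ⊥_ C) : IsIso i :=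
  ⟨initial.to X, eq_of_coprod_inl_eq_inr hX _ _, initial.hom_ext _ _⟩

end CategoryTheory.Limits

theorem initial_strict_of_codiagonal_pullbacks_general {C : Type*} [Category C]
    [HasInitial C] [HasBinaryCoproducts C]
    (h : ∀ {I : C} (i : I ⟶ ⊥_ C),
      IsPullback (coprod.desc (𝟙 I) (𝟙 I)) (coprod.map i i) i
        (coprod.desc (𝟙 (⊥_ C)) (𝟙 (⊥_ C)))) :
    ∀ {I : C} (i : I ⟶ ⊥_ C), IsIso i := fun i =>
  isIso_to_initial_of_coprod_inl_eq_inr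
    (coprod_inl_eq_inr_of_isPullback_codiag (initial.hom_ext _ _) (h i)) i

/-- In a finitely complete category with an initial object and binary coproducts, if for
every morphism `i : I ⟶ ⊥` the codiagonal square over `i` is a pullback, then the
initial object is strict: every morphism into it is an isomorphism. -/
theorem initial_strict_of_codiagonal_pullbacks {C : Type*} [Category C]
    [HasFiniteLimits C] [HasInitial C] [HasBinaryCoproducts C]
    (h : ∀ {I : C} (i : I ⟶ ⊥_ C),
      IsPullback (coprod.desc (𝟙 I) (𝟙 I)) (coprod.map i i) i
        (coprod.desc (𝟙 (⊥_ C)) (𝟙 (⊥_ C)))) :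
    ∀ {I : C} (i : I ⟶ ⊥_ C), IsIso i :=
  initial_strict_of_codiagonal_pullbacks_general h
end

section
/- In an additive category, for each regular epimorphism p : E → B, the square with top [1_E,1_E] : E⊕E → E, left p⊕p : E⊕E → B⊕B, bottom [1_B,1_B] : B⊕B → B, right p : E → B is a feeble pullback, i.e., if the category has the relevant pullback, the unique induced morphism from E⊕E into the pullback of [1_B,1_B] along p is a regular epimorphism. -/
/-!
Writing `∇` for a codiagonal, the pullback of `∇ : B ⊞ B ⟶ B` along `p` is `B ⊞ E`, via
`(b, e) ↦ (e, (b, p e - b))`. Under this identification, and after precomposing with the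
shear automorphism `(x, y) ↦ (x, x + y)` of `E ⊞ E`, the comparison morphism becomes
`p ⊞ 𝟙_E`, which is a pushout of `p` and hence a regular epimorphism.
-/

open CategoryTheory Limits

section

variable {C : Type*} [Category C]

lemma isRegularEpi_coprod_map_id {A B : C} (f : A ⟶ B) [IsRegularEpi f] (X : C)
    [HasBinaryCoproduct A X] [HasBinaryCoproduct B X] : IsRegularEpi (coprod.map f (𝟙 X)) :=
  ⟨⟨regularOfIsPushoutSndOfRegular (IsRegularEpi.getStruct f)
    (IsPushout.of_coprod_inl_with_id f X).w (IsPushout.of_coprod_inl_with_id f X).isColimit⟩⟩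

lemma isRegularEpi_biprod_map_id [HasZeroMorphisms C] {A B : C} (f : A ⟶ B) [IsRegularEpi f]
    (X : C) [HasBinaryBiproduct A X] [HasBinaryBiproduct B X] :
    IsRegularEpi (biprod.map f (𝟙 X)) :=
  ((MorphismProperty.regularEpi C).arrow_mk_iso_iff
    (Arrow.isoMk (biprod.isoCoprod A X) (biprod.isoCoprod B X) (by dsimp; ext <;> simp))).2
    (isRegularEpi_coprod_map_id f X)

lemma isPullback_biprod_codiag [Preadditive C] {E B : C} [HasBinaryBiproduct B E]
    [HasBinaryBiproduct B B] (f : E ⟶ B) :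
    IsPullback biprod.snd (biprod.lift biprod.fst (biprod.snd ≫ f - biprod.fst)) f
      (biprod.desc (𝟙 B) (𝟙 B)) := by
  refine IsPullback.of_isLimit' ⟨by ext <;> simp⟩ (PullbackCone.IsLimit.mk _
    (fun s => biprod.lift (s.snd ≫ biprod.fst) s.fst) (by simp) (fun s => ?_)
    (fun s m h₁ h₂ => ?_))
  · have hs : s.fst ≫ f = s.snd ≫ biprod.fst + s.snd ≫ biprod.snd := by
      simp [s.condition, biprod.desc_eq]
    ext <;> simp [hs]
  · ext <;> simp [← h₁, ← h₂]

end

/-- In an additive category, for each regular epimorphism `p : E ⟶ B`, provided the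
pullback of `[1,1] : B⊞B ⟶ B` along `p` exists, the square with top `[1,1] : E⊞E ⟶ E`,
left `p⊞p`, right `p` and bottom `[1,1] : B⊞B ⟶ B` is a feeble pullback: the induced
comparison morphism into the pullback is a regular epimorphism. -/
theorem additive_regularEpi_square_feeble_pullback {C : Type*} [Category C]
    [Preadditive C] [HasBinaryBiproducts C] {E B : C} (p : E ⟶ B) [IsRegularEpi p]
    [HasPullback p (biprod.desc (𝟙 B) (𝟙 B))]
    (w : biprod.desc (𝟙 E) (𝟙 E) ≫ p = biprod.map p p ≫ biprod.desc (𝟙 B) (𝟙 B)) :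
    Nonempty (RegularEpi
      (pullback.lift (biprod.desc (𝟙 E) (𝟙 E)) (biprod.map p p) w :
        E ⊞ E ⟶ pullback p (biprod.desc (𝟙 B) (𝟙 B)))) := by
  have sq := isPullback_biprod_codiag p
  have comparison_eq : pullback.lift _ _ w =
      (Biprod.unipotentUpper (𝟙 E)).hom ≫ biprod.map p (𝟙 E) ≫ sq.isoPullback.hom := by
    apply pullback.hom_ext <;> ext <;>
      simp [pullback.lift_fst, pullback.lift_snd_assoc, Biprod.ofComponents]
  rw [comparison_eq]
  open MorphismProperty in
  exact (RespectsIso.precomp _ _ _ (RespectsIso.postcomp (regularEpi C) _ _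
    (isRegularEpi_biprod_map_id p E))).regularEpi
end

section
/- In a pointed finitely complete category with finite coproducts in which binary coproducts of pullback squares are pullback squares, binary coproducts are biproducts: for all objects A, B, the square with top [1_A,0] : A+B → A, left [0,1_B] : A+B → B, and with both maps to the zero object, is a pullback, so A+B is also a product of A and B. -/
/-!
The squares `A = A → 0 = 0` (identities against zero maps) and `B = B → 0 = 0` are trivially
pullbacks. Their coproduct is a pullback by hypothesis, and under `A ⨿ 0 ≅ A`, `0 ⨿ B ≅ B`,
`0 ⨿ 0 ≅ 0` it becomes the square of `[1, 0]` and `[0, 1]` over `0`. A pullback over a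
terminal object is a product.
-/

open CategoryTheory Limits ZeroObject

namespace CategoryTheory

variable {C : Type*} [Category C]

noncomputable def IsPullback.isLimitBinaryFanOfIsTerminal {P X Y Z : C} {fst : P ⟶ X}
    {snd : P ⟶ Y} {f : X ⟶ Z} {g : Y ⟶ Z} (h : IsPullback fst snd f g) (hZ : IsTerminal Z) :
    IsLimit (BinaryFan.mk fst snd) :=
  BinaryFan.IsLimit.mk _ (fun u v ↦ h.lift u v (hZ.hom_ext _ _)) (by simp) (by simp)
    (fun _ _ _ h₁ h₂ ↦ h.hom_ext (by simpa using h₁) (by simpa using h₂))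

namespace Limits

variable [HasZeroObject C] [HasZeroMorphisms C] [HasBinaryCoproducts C]

lemma coprod_map_id_zero_comp_coprodZeroIso_hom (A B : C) :
    coprod.map (𝟙 A) (0 : B ⟶ 0) ≫ (coprodZeroIso A).hom = coprod.desc (𝟙 A) 0 := by
  ext <;> simp [coprod.inl_desc, coprod.inr_desc]

lemma coprod_map_zero_id_comp_zeroCoprodIso_hom (A B : C) :
    coprod.map (0 : A ⟶ 0) (𝟙 B) ≫ (zeroCoprodIso B).hom = coprod.desc 0 (𝟙 B) := by
  ext <;> simp [coprod.inl_desc, coprod.inr_desc]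

end Limits

end CategoryTheory

namespace CoprodOfPullbacksIsPullback

variable {C : Type*} [Category C] [HasZeroObject C] [HasZeroMorphisms C] [HasBinaryCoproducts C]

lemma isPullback_coprod_desc (hco : CoprodOfPullbacksIsPullback C) (A B : C) :
    IsPullback (coprod.desc (𝟙 A) 0) (coprod.desc 0 (𝟙 B)) (0 : A ⟶ 0) (0 : B ⟶ 0) :=
  (hco _ _ _ _ _ _ _ _ (IsPullback.of_id_fst (f := (0 : A ⟶ 0)))
      (IsPullback.of_id_snd (f := (0 : B ⟶ 0)))).of_iso
    (Iso.refl _) (coprodZeroIso A) (zeroCoprodIso B) (zeroCoprodIso 0)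
    ((coprod_map_id_zero_comp_coprodZeroIso_hom A B).trans (Category.id_comp _).symm)
    ((coprod_map_zero_id_comp_zeroCoprodIso_hom A B).trans (Category.id_comp _).symm)
    ((isZero_zero C).eq_of_tgt _ _) ((isZero_zero C).eq_of_tgt _ _)

end CoprodOfPullbacksIsPullback

theorem coproducts_are_biproducts_general {C : Type*} [Category C]
    [HasZeroObject C] [HasZeroMorphisms C] [HasFiniteCoproducts C]
    (hco : CoprodOfPullbacksIsPullback C) (A B : C) :
    IsPullback (coprod.desc (𝟙 A) 0) (coprod.desc 0 (𝟙 B)) (0 : A ⟶ 0) (0 : B ⟶ 0) ∧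
      Nonempty (IsLimit
        (BinaryFan.mk (coprod.desc (𝟙 A) 0 : A ⨿ B ⟶ A) (coprod.desc 0 (𝟙 B)))) := by
  have h := hco.isPullback_coprod_desc A B
  exact ⟨h, ⟨h.isLimitBinaryFanOfIsTerminal (isZero_zero C).isTerminal⟩⟩

/-- In a pointed finitely complete category with finite coproducts in which binary
coproducts of pullback squares are pullback squares, binary coproducts are biproducts:
the square with top `[1,0] : A+B ⟶ A`, left `[0,1] : A+B ⟶ B` and both remaining maps
to the zero object is a pullback, so `A+B` is also a product of `A` and `B`. -/
theorem coproducts_are_biproducts {C : Type*} [Category C]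
    [HasZeroObject C] [HasZeroMorphisms C] [HasFiniteLimits C] [HasFiniteCoproducts C]
    (hco : CoprodOfPullbacksIsPullback C) (A B : C) :
    IsPullback (coprod.desc (𝟙 A) 0) (coprod.desc 0 (𝟙 B)) (0 : A ⟶ 0) (0 : B ⟶ 0) ∧
      Nonempty (IsLimit
        (BinaryFan.mk (coprod.desc (𝟙 A) 0 : A ⨿ B ⟶ A) (coprod.desc 0 (𝟙 B)))) :=
  coproducts_are_biproducts_general hco A B
end

section
/- In a regular category, the horizontal composite of two feeble pullback squares is a feeble pullback square. -/
open CategoryTheory Limits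

/-- A commutative square (top `fst`, left `snd`, right `f`, bottom `g`) is a feeble
pullback if the canonical comparison morphism into the pullback is a regular
epimorphism. -/
def IsFeeblePullback {C : Type*} [CategoryTheory.Category C] {P X Y Z : C}
    (fst : P ⟶ X) (snd : P ⟶ Y) (f : X ⟶ Z) (g : Y ⟶ Z)
    [CategoryTheory.Limits.HasPullback f g] : Prop :=
  ∃ w : fst ≫ f = snd ≫ g,
    Nonempty (CategoryTheory.RegularEpi (CategoryTheory.Limits.pullback.lift fst snd w))

/-- Regular epimorphisms are stable under pullback. -/
def RegularEpisPullbackStable (C : Type*) [CategoryTheory.Category C]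
    [CategoryTheory.Limits.HasPullbacks C] : Prop :=
  ∀ {X Y Z : C} (f : X ⟶ Z) (g : Y ⟶ Z), CategoryTheory.RegularEpi g →
    Nonempty (CategoryTheory.RegularEpi (CategoryTheory.Limits.pullback.fst f g))

/-- Kernel pairs admit coequalizers. -/
def HasKernelPairCoequalizers (C : Type*) [CategoryTheory.Category C]
    [CategoryTheory.Limits.HasPullbacks C] : Prop :=
  ∀ {X Y : C} (f : X ⟶ Y),
    CategoryTheory.Limits.HasCoequalizer (CategoryTheory.Limits.pullback.fst f f)
      (CategoryTheory.Limits.pullback.snd f f)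

/-!
The comparison map of the pasted square factors as the comparison map of the left square,
followed by the base change of the comparison map of the right square along a projection,
followed by the pasting isomorphism `pullbackLeftPullbackSndIso`. In a regular category the first
two are regular epimorphisms by hypothesis and by pullback stability, and regular epimorphisms
compose (they are exactly the extremal epimorphisms), so the comparison map of the pasted square
is a regular epimorphism.
-/

namespace CategoryTheory

variable {C : Type*} [Category C]

theorem Regular.of_hasKernelPairCoequalizers [HasFiniteLimits C]
    (hcoeq : HasKernelPairCoequalizers C) (hstab : RegularEpisPullbackStable C) : Regular C where
  hasCoequalizer_of_isKernelPair {_ _ _ f g₁ g₂} h := by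
    have := hcoeq f
    have key := hasCoequalizer_epi_comp (f := pullback.fst f f) (g := pullback.snd f f)
      h.isoPullback.hom
    rwa [h.isoPullback_hom_fst, h.isoPullback_hom_snd] at key
  regularEpiIsStableUnderBaseChange :=
    .mk' fun _ _ _ f g _ ⟨hg⟩ => ⟨hstab f g hg.some⟩

theorem isFeeblePullback_iff {P X Y Z : C} (fst : P ⟶ X) (snd : P ⟶ Y) (f : X ⟶ Z) (g : Y ⟶ Z)
    [HasPullback f g] :
    IsFeeblePullback fst snd f g ↔
      ∃ w : fst ≫ f = snd ≫ g, IsRegularEpi (pullback.lift fst snd w) :=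
  exists_congr fun _ => ⟨fun h => ⟨h⟩, fun h => h.regularEpi⟩

variable [Regular C]

theorem isRegularEpi_pullbackMap_of_isRegularEpi {B P B' A' : C} (q : B ⟶ P) (s : P ⟶ B')
    (β : B ⟶ B') (f' : A' ⟶ B') (hβ : q ≫ s = β) [IsRegularEpi q] :
    IsRegularEpi (pullback.map β f' s f' q (𝟙 _) (𝟙 _) (by simp [hβ]) (by simp)) := by
  -- By the pasting lemma, the map is the base change of `q` along `pullback.fst s f'`.
  have hbig : IsPullback (pullback.map β f' s f' q (𝟙 _) (𝟙 _) (by simp [hβ]) (by simp) ≫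
      pullback.snd s f') (pullback.fst β f') f' (q ≫ s) := by
    simpa [pullback.lift_snd, hβ] using (IsPullback.of_hasPullback β f').flip
  exact Regular.regularEpiIsStableUnderBaseChange.of_isPullback
    (hbig.of_right (pullback.lift_fst _ _ _) (IsPullback.of_hasPullback s f').flip).flip ‹_›

theorem IsFeeblePullback.paste_horiz {A B Cc A' B' C' : C} {f : A ⟶ B} {g : B ⟶ Cc}
    {α : A ⟶ A'} {β : B ⟶ B'} {γ : Cc ⟶ C'} {f' : A' ⟶ B'} {g' : B' ⟶ C'}
    (h₁ : IsFeeblePullback f α β f') (h₂ : IsFeeblePullback g β γ g') :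
    IsFeeblePullback (f ≫ g) α γ (f' ≫ g') := by
  rw [isFeeblePullback_iff] at h₁ h₂ ⊢
  obtain ⟨w₁, _⟩ := h₁
  obtain ⟨w₂, _⟩ := h₂
  have := isRegularEpi_pullbackMap_of_isRegularEpi (pullback.lift g β w₂) (pullback.snd γ g')
    β f' (pullback.lift_snd _ _ _)
  have w : (f ≫ g) ≫ γ = α ≫ f' ≫ g' := by simp [reassoc_of% w₁, w₂]
  have hfac : pullback.lift (f ≫ g) α w = pullback.lift f α w₁ ≫
      pullback.map β f' (pullback.snd γ g') f' (pullback.lift g β w₂) (𝟙 _) (𝟙 _)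
        (by simp [pullback.lift_snd]) (by simp) ≫ (pullbackLeftPullbackSndIso γ g' f').hom := by
    ext <;> simp [pullback.lift_fst, pullback.lift_snd, pullback.lift_fst_assoc]
  exact ⟨w, hfac ▸ inferInstance⟩

end CategoryTheory

/-- In a regular category, the horizontal composite of two feeble pullback squares is a
feeble pullback square. -/
theorem feeble_pullback_paste {C : Type*} [Category C]
    [HasFiniteLimits C] (hcoeq : HasKernelPairCoequalizers C)
    (hstab : RegularEpisPullbackStable C)
    {A B Cc A' B' C' : C} (f : A ⟶ B) (g : B ⟶ Cc)
    (α : A ⟶ A') (β : B ⟶ B') (γ : Cc ⟶ C') (f' : A' ⟶ B') (g' : B' ⟶ C')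
    (h₁ : IsFeeblePullback f α β f') (h₂ : IsFeeblePullback g β γ g') :
    IsFeeblePullback (f ≫ g) α γ (f' ≫ g') := by
  have := Regular.of_hasKernelPairCoequalizers hcoeq hstab
  exact h₁.paste_horiz h₂
end

section
/- In a regular category, if the composite of two horizontally pasted commutative squares is a feeble pullback and the bottom morphism of the left-hand square is a regular epimorphism, then the right-hand square is a feeble pullback. -/
open CategoryTheory Limits

/-!
Let `u : B ⟶ Cc ×_{C'} B'` be the comparison map of the right-hand square. Pulling `f'` back
along the projection `Cc ×_{C'} B' ⟶ B'` gives, by pullback pasting, `Cc ×_{C'} A'`, and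
`f ≫ u` factors as the comparison map of the outer square followed by this pullback of `f'`.
Both are regular epimorphisms, hence so is `f ≫ u`. In a regular category regular and strong
epimorphisms coincide, and strong epimorphisms cancel on the right, so `u` is a regular
epimorphism.
-/

namespace HasKernelPairCoequalizers

variable {C : Type*} [Category C] [HasFiniteLimits C]

theorem hasCoequalizer_of_isKernelPair (hcoeq : HasKernelPairCoequalizers C) {X Y Z : C}
    {f : X ⟶ Y} {g₁ g₂ : Z ⟶ X} (h : IsKernelPair f g₁ g₂) : HasCoequalizer g₁ g₂ :=
  have := hcoeq f
  hasColimit_of_iso (parallelPair.ext (F := parallelPair g₁ g₂)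
    (G := parallelPair (pullback.fst f f) (pullback.snd f f)) h.isoPullback (Iso.refl _)
    (by simp) (by simp))

theorem regular (hcoeq : HasKernelPairCoequalizers C) (hstab : RegularEpisPullbackStable C) :
    Regular C where
  hasCoequalizer_of_isKernelPair := hcoeq.hasCoequalizer_of_isKernelPair
  regularEpiIsStableUnderBaseChange := .mk' fun _ _ _ f g _ ⟨⟨hg⟩⟩ => ⟨hstab f g hg⟩

end HasKernelPairCoequalizers

theorem CategoryTheory.Regular.isRegularEpi_of_isRegularEpi_comp {C : Type*} [Category C]
    [Regular C] {X Y Z : C} (f : X ⟶ Y) (g : Y ⟶ Z) [IsRegularEpi (f ≫ g)] :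
    IsRegularEpi g :=
  have := strongEpi_of_strongEpi f g
  inferInstance

theorem comp_pullback_lift_eq_lift_comp_pullbackLeftPullbackSndIso_inv_fst {C : Type*}
    [Category C] [HasPullbacks C] {A B Cc A' B' C' : C} (f : A ⟶ B) (g : B ⟶ Cc)
    (α : A ⟶ A') (β : B ⟶ B') (γ : Cc ⟶ C') (f' : A' ⟶ B') (g' : B' ⟶ C')
    (w₁ : f ≫ β = α ≫ f') (w₂ : g ≫ γ = β ≫ g') :
    f ≫ pullback.lift g β w₂ = pullback.lift (f ≫ g) α (by simp [w₂, reassoc_of% w₁]) ≫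
      (pullbackLeftPullbackSndIso γ g' f').inv ≫ pullback.fst _ _ := by
  apply pullback.hom_ext
  · simp [pullback.lift_fst]
  · simp [pullback.lift_snd, pullback.lift_snd_assoc, w₁]

/-- In a regular category, if the composite of two horizontally pasted commutative
squares is a feeble pullback and the bottom morphism of the left-hand square is a
regular epimorphism, then the right-hand square is a feeble pullback. -/
theorem feeble_pullback_right_of_comp {C : Type*} [Category C]
    [HasFiniteLimits C] (hcoeq : HasKernelPairCoequalizers C)
    (hstab : RegularEpisPullbackStable C)
    {A B Cc A' B' C' : C} (f : A ⟶ B) (g : B ⟶ Cc)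
    (α : A ⟶ A') (β : B ⟶ B') (γ : Cc ⟶ C') (f' : A' ⟶ B') (g' : B' ⟶ C')
    (w₁ : f ≫ β = α ≫ f') (w₂ : g ≫ γ = β ≫ g')
    (hcomp : IsFeeblePullback (f ≫ g) α γ (f' ≫ g')) (hf' : RegularEpi f') :
    IsFeeblePullback g β γ g' := by
  have := hcoeq.regular hstab
  obtain ⟨w, ⟨hcomp⟩⟩ := hcomp
  have : IsRegularEpi (pullback.lift (f ≫ g) α w) := ⟨⟨hcomp⟩⟩
  have : IsRegularEpi f' := ⟨⟨hf'⟩⟩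
  have : IsRegularEpi (f ≫ pullback.lift g β w₂) := by
    rw [comp_pullback_lift_eq_lift_comp_pullbackLeftPullbackSndIso_inv_fst f g α β γ f' g' w₁ w₂]
    infer_instance
  have := Regular.isRegularEpi_of_isRegularEpi_comp f (pullback.lift g β w₂)
  exact ⟨w₂, IsRegularEpi.regularEpi⟩
end

section
/- In a pointed finitely complete category with finite coproducts in which binary coproducts of pullback squares are pullbacks, for any coproduct inclusion ι₂ : S → A+S and any monomorphism n : S → B, the square with top n : S → B, left ι₂ : S → A+S, bottom 1_A + n : A+S → A+B, right ι₂ : B → A+B is both a pushout and a pullback, and 1_A + n is a monomorphism. -/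
open CategoryTheory Limits

namespace CategoryTheory.Limits

variable {C : Type*} [Category C] [HasBinaryCoproducts C]

theorem isPushout_inr_coprodMap_id (A : C) {S B : C} (f : S ⟶ B) :
    IsPushout f (coprod.inr : S ⟶ A ⨿ S) (coprod.inr : B ⟶ A ⨿ B) (coprod.map (𝟙 A) f) := by
  refine IsPushout.of_isColimit' ⟨by simp⟩ <|
    PushoutCocone.IsColimit.mk _ (fun s => coprod.desc (coprod.inl ≫ s.inr) s.inl)
      (fun s => coprod.inr_desc _ _) (fun s => ?_) (fun s m hinr hmap => ?_)
  · ext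
    · rw [coprod.map_desc, coprod.inl_desc, Category.id_comp]
    · rw [coprod.map_desc, coprod.inr_desc, s.condition]
  · ext
    · rw [coprod.inl_desc, ← hmap, coprod.inl_map_assoc, Category.id_comp]
    · rw [coprod.inr_desc, hinr]

theorem isPullback_inr_coprodMap_id [HasInitial C] (hco : CoprodOfPullbacksIsPullback C)
    (A : C) {S B : C} (f : S ⟶ B) :
    IsPullback f (coprod.inr : S ⟶ A ⨿ S) (coprod.inr : B ⟶ A ⨿ B) (coprod.map (𝟙 A) f) := by
  -- Up to `⊥ ⨿ X ≅ X`, the square is the sum of the trivial pullbacks of `⊥ ⟶ A` along `𝟙 A`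
  -- and of `𝟙 S` along `f`.
  have hA : IsPullback (𝟙 (⊥_ C)) (initial.to A) (initial.to A) (𝟙 A) :=
    IsPullback.of_horiz_isIso ⟨by simp⟩
  refine (hco _ _ _ _ _ _ _ _ hA (IsPullback.of_id_snd (f := f))).of_iso
    (coprod.leftUnitor S) (coprod.leftUnitor B) (Iso.refl _) (Iso.refl _)
    (coprod.leftUnitor_naturality f) ?_ ?_ (by simp)
  all_goals
    rw [Iso.refl_hom, Category.comp_id, ← Iso.inv_comp_eq, coprod.leftUnitor_inv, coprod.inr_map,
      Category.id_comp]

theorem mono_coprodMap (hco : CoprodOfPullbacksIsPullback C) {X Y X' Y' : C}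
    (f : X ⟶ Y) (f' : X' ⟶ Y') [Mono f] [Mono f'] : Mono (coprod.map f f') := by
  have hker := hco _ _ _ _ _ _ _ _ (IsKernelPair.id_of_mono f) (IsKernelPair.id_of_mono f')
  rw [coprod.map_id_id] at hker
  exact IsKernelPair.mono_of_isIso_fst hker

end CategoryTheory.Limits

theorem pushout_of_mono_along_coprod_inclusion_general {C : Type*} [Category C]
    [HasFiniteCoproducts C]
    (hco : CoprodOfPullbacksIsPullback C)
    {S A B : C} (n : S ⟶ B) [Mono n] :
    IsPushout n (coprod.inr : S ⟶ A ⨿ S) (coprod.inr : B ⟶ A ⨿ B)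
        (coprod.map (𝟙 A) n) ∧
      IsPullback n (coprod.inr : S ⟶ A ⨿ S) (coprod.inr : B ⟶ A ⨿ B)
        (coprod.map (𝟙 A) n) ∧
      Mono (coprod.map (𝟙 A) n) :=
  ⟨isPushout_inr_coprodMap_id A n, isPullback_inr_coprodMap_id hco A n, mono_coprodMap hco (𝟙 A) n⟩

/-- In a pointed finitely complete category with finite coproducts in which binary
coproducts of pullback squares are pullback squares, for any coproduct inclusion
`ι₂ : S ⟶ A+S` and any monomorphism `n : S ⟶ B`, the square with top `n : S ⟶ B`, left
`ι₂ : S ⟶ A+S`, right `ι₂ : B ⟶ A+B` and bottom `1_A + n : A+S ⟶ A+B` is both a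
pushout and a pullback, and `1_A + n` is a monomorphism. -/
theorem pushout_of_mono_along_coprod_inclusion {C : Type*} [Category C]
    [HasZeroObject C] [HasFiniteLimits C] [HasFiniteCoproducts C]
    (hco : CoprodOfPullbacksIsPullback C)
    {S A B : C} (n : S ⟶ B) [Mono n] :
    IsPushout n (coprod.inr : S ⟶ A ⨿ S) (coprod.inr : B ⟶ A ⨿ B)
        (coprod.map (𝟙 A) n) ∧
      IsPullback n (coprod.inr : S ⟶ A ⨿ S) (coprod.inr : B ⟶ A ⨿ B)
        (coprod.map (𝟙 A) n) ∧
      Mono (coprod.map (𝟙 A) n) :=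
  pushout_of_mono_along_coprod_inclusion_general hco n
end
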